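/- arXiv:0812.0329 — 2 statements merged into one kernel-verified Lean document; each statement's English description precedes it below -/
import Mathlib

section
/- For any dictionary D with unit-norm columns partitioned into blocks of size d, the block-coherence μ_B (a maximum over distinct blocks) is at most the conventional coherence μ: μ_B ≤ μ, where μ = max_{ℓ≠r} |d_ℓ^H d_r| over distinct columns. -/
open Matrix

noncomputable def rho {m n : Type*} [Fintype m] [Fintype n] [DecidableEq n]
    (A : Matrix m n ℂ) : ℝ :=
  ‖LinearMap.toContinuousLinearMap (Matrix.toEuclideanLin A)‖

noncomputable def enormC {n : Type*} [Fintype n] (v : n → ℂ) : ℝ :=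
  Real.sqrt (∑ i, ‖v i‖ ^ 2)

def blk {α β γ : Type*} (D : Matrix α (β × γ) ℂ) (ℓ : β) : Matrix α γ ℂ :=
  Matrix.of fun i j => D i (ℓ, j)

def blk2 {ι κ d₁ d₂ : Type*} (A : Matrix (ι × d₁) (κ × d₂) ℂ) (ℓ : ι) (r : κ) :
    Matrix d₁ d₂ ℂ :=
  Matrix.of fun i j => A (ℓ, i) (r, j)

noncomputable def rhoc {ι κ d : Type*} [Fintype ι] [Fintype κ] [Fintype d] [DecidableEq d]
    (A : Matrix (ι × d) (κ × d) ℂ) : ℝ :=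
  ⨆ r : κ, ∑ ℓ : ι, rho (blk2 A ℓ r)

noncomputable def vnorm1 {ι d : Type*} [Fintype ι] [Fintype d] (v : ι × d → ℂ) : ℝ :=
  ∑ ℓ : ι, enormC (fun j => v (ℓ, j))

noncomputable def vnormInf {ι d : Type*} [Fintype ι] [Fintype d] (v : ι × d → ℂ) : ℝ :=
  ⨆ ℓ : ι, enormC (fun j => v (ℓ, j))

noncomputable def pinv {α n : Type*} [Fintype α] [Fintype n] [DecidableEq n]
    (B : Matrix α n ℂ) : Matrix n α ℂ :=
  (Bᴴ * B)⁻¹ * Bᴴ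

noncomputable def muB {L M d : ℕ} (D : Matrix (Fin L) (Fin M × Fin d) ℂ) : ℝ :=
  ⨆ p : {p : Fin M × Fin M // p.1 ≠ p.2},
    (1 / (d : ℝ)) * rho ((blk D p.val.1)ᴴ * blk D p.val.2)

noncomputable def coherence {L M d : ℕ} (D : Matrix (Fin L) (Fin M × Fin d) ℂ) : ℝ :=
  ⨆ p : {p : (Fin M × Fin d) × (Fin M × Fin d) // p.1 ≠ p.2},
    ‖∑ i : Fin L, star (D i p.val.1) * D i p.val.2‖

lemma rho_le_card_mul {m n : Type*} [Fintype m] [Fintype n] [DecidableEq n]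
    (A : Matrix m n ℂ) (c : ℝ) (hc : 0 ≤ c) (h : ∀ i j, ‖A i j‖ ≤ c)
    (hcard : Fintype.card m = Fintype.card n) :
    rho A ≤ (Fintype.card n : ℝ) * c := by
  apply ContinuousLinearMap.opNorm_le_bound _ (by positivity)
  intro x
  have hsum : ∑ j, ‖x j‖ ≤ Real.sqrt (Fintype.card n) * ‖x‖ := by
    have h1 : (∑ j, ‖x j‖) ^ 2 ≤ (Fintype.card n : ℝ) * ∑ j, ‖x j‖ ^ 2 := by
      simpa using sq_sum_le_card_mul_sum_sq (s := Finset.univ) (f := fun j => ‖x j‖)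
    have h2 : ‖x‖ = Real.sqrt (∑ j, ‖x j‖ ^ 2) := by
      rw [EuclideanSpace.norm_eq]
    have := Real.sqrt_le_sqrt h1
    rwa [Real.sqrt_sq (by positivity), Real.sqrt_mul (by positivity), ← h2] at this
  have key : ∀ i, ‖(toEuclideanLin A x : EuclideanSpace ℂ m) i‖ ≤ c * (Real.sqrt (Fintype.card n) * ‖x‖) := by
    intro i
    have : (toEuclideanLin A x : EuclideanSpace ℂ m) i = ∑ j, A i j * x j := rfl
    rw [this]
    calc ‖∑ j, A i j * x j‖ ≤ ∑ j, ‖A i j * x j‖ := norm_sum_le _ _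
      _ ≤ ∑ j, c * ‖x j‖ := by
          refine Finset.sum_le_sum fun j _ => ?_
          rw [norm_mul]
          exact mul_le_mul_of_nonneg_right (h i j) (norm_nonneg _)
      _ = c * ∑ j, ‖x j‖ := by rw [Finset.mul_sum]
      _ ≤ c * (Real.sqrt (Fintype.card n) * ‖x‖) := by
          exact mul_le_mul_of_nonneg_left hsum hc
  have hnorm : ‖LinearMap.toContinuousLinearMap (toEuclideanLin A) x‖
      = Real.sqrt (∑ i, ‖(toEuclideanLin A x : EuclideanSpace ℂ m) i‖ ^ 2) := by
    rw [EuclideanSpace.norm_eq]; rfl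
  rw [hnorm]
  have : ∑ i, ‖(toEuclideanLin A x : EuclideanSpace ℂ m) i‖ ^ 2
      ≤ (Fintype.card m : ℝ) * (c * (Real.sqrt (Fintype.card n) * ‖x‖)) ^ 2 := by
    calc ∑ i, ‖(toEuclideanLin A x : EuclideanSpace ℂ m) i‖ ^ 2
        ≤ ∑ _i : m, (c * (Real.sqrt (Fintype.card n) * ‖x‖)) ^ 2 :=
          Finset.sum_le_sum fun i _ => by
            have := key i
            exact pow_le_pow_left₀ (norm_nonneg _) this 2
      _ = (Fintype.card m : ℝ) * (c * (Real.sqrt (Fintype.card n) * ‖x‖)) ^ 2 := by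
          simp [Finset.sum_const, nsmul_eq_mul]
  calc Real.sqrt (∑ i, ‖(toEuclideanLin A x : EuclideanSpace ℂ m) i‖ ^ 2)
      ≤ Real.sqrt ((Fintype.card m : ℝ) * (c * (Real.sqrt (Fintype.card n) * ‖x‖)) ^ 2) :=
        Real.sqrt_le_sqrt this
    _ = Real.sqrt (Fintype.card m) * (c * (Real.sqrt (Fintype.card n) * ‖x‖)) := by
        rw [Real.sqrt_mul (by positivity), Real.sqrt_sq (by positivity)]
    _ = (Fintype.card n : ℝ) * c * ‖x‖ := by
        rw [hcard]
        have hs : Real.sqrt (Fintype.card n) * Real.sqrt (Fintype.card n) = (Fintype.card n : ℝ) :=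
          Real.mul_self_sqrt (by positivity)
        linear_combination (c * ‖x‖) * hs

theorem block_coherence_le_coherence (L M d : ℕ) (hd : 0 < d)
    (D : Matrix (Fin L) (Fin M × Fin d) ℂ)
    (hcol : ∀ c : Fin M × Fin d, enormC (fun i => D i c) = 1) :
    muB D ≤ coherence D := by
  have hcohnn : 0 ≤ coherence D := by
    unfold coherence
    rcases isEmpty_or_nonempty {p : (Fin M × Fin d) × (Fin M × Fin d) // p.1 ≠ p.2} with he | hne
    · rw [Real.iSup_of_isEmpty]
    · obtain ⟨p⟩ := hne
      exact le_trans (norm_nonneg _)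
        (le_ciSup (f := fun q : {q : (Fin M × Fin d) × (Fin M × Fin d) // q.1 ≠ q.2} =>
          ‖∑ i : Fin L, star (D i q.val.1) * D i q.val.2‖) (Set.finite_range _).bddAbove p)
  refine Real.iSup_le (fun p => ?_) hcohnn
  have hent : ∀ i j, ‖((blk D p.val.1)ᴴ * blk D p.val.2) i j‖ ≤ coherence D := by
    intro i j
    have heq : ((blk D p.val.1)ᴴ * blk D p.val.2) i j
        = ∑ k, star (D k (p.val.1, i)) * D k (p.val.2, j) := by
      simp [Matrix.mul_apply, blk, Matrix.conjTranspose_apply]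
    rw [heq]
    exact le_ciSup (f := fun q : {q : (Fin M × Fin d) × (Fin M × Fin d) // q.1 ≠ q.2} =>
        ‖∑ i : Fin L, star (D i q.val.1) * D i q.val.2‖)
      (Set.finite_range _).bddAbove
      ⟨((p.val.1, i), (p.val.2, j)), fun h => p.prop (congrArg Prod.fst h)⟩
  have hrho := rho_le_card_mul ((blk D p.val.1)ᴴ * blk D p.val.2) (coherence D) hcohnn hent rfl
  rw [Fintype.card_fin] at hrho
  have hd' : (0:ℝ) < d := by exact_mod_cast hd
  calc (1 / (d : ℝ)) * rho ((blk D p.val.1)ᴴ * blk D p.val.2)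
      ≤ (1 / (d : ℝ)) * ((d : ℝ) * coherence D) :=
        mul_le_mul_of_nonneg_left hrho (by positivity)
    _ = coherence D := by field_simp
end

section
/- Let v ∈ ℂ^N (N = Md) be partitioned into length-d blocks with ‖v[ℓ]‖_2 > 0 for all ℓ, and let A be an L×N matrix (L = Rd) with d×d blocks A[ℓ,r]. Then ‖Av‖_{2,1} ≤ ρ_c(A)‖v‖_{2,1}, and if the values ρ_c(A J_ℓ) for ℓ = 1,…,M are not all equal, the inequality is strict, where J_ℓ is the N×d matrix whose ℓ-th d×d block is I_d and all other blocks are zero. -/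
open Matrix

/-- selector matrix whose ℓ-th d×d block is the identity -/
def Jsel {M d : ℕ} (ℓ : Fin M) : Matrix (Fin M × Fin d) (Unit × Fin d) ℂ :=
  Matrix.of fun p q => if p.1 = ℓ ∧ p.2 = q.2 then 1 else 0

/-! Splitting `A v` into block rows, each block `(A v)[ℓ] = Σ_r A[ℓ,r] v[r]` has norm at most
`Σ_r ρ(A[ℓ,r]) ‖v[r]‖`; summing over `ℓ` and exchanging sums bounds `‖A v‖_{2,1}` by
`Σ_r c_r ‖v[r]‖` with column sums `c_r = Σ_ℓ ρ(A[ℓ,r]) = ρ_c(A J_r) ≤ ρ_c(A)`. If the `c_r` are not all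
equal, some `c_r` is strictly below their maximum `ρ_c(A)`, and since every block `v[r]` is nonzero
the last estimate is then strict. -/

lemma enormC_eq_norm_toLp {n : Type*} [Fintype n] (u : n → ℂ) :
    enormC u = ‖WithLp.toLp 2 u‖ := by
  rw [EuclideanSpace.norm_eq]; rfl

lemma enormC_sum_le {n κ : Type*} [Fintype n] [Fintype κ] (f : κ → n → ℂ) :
    enormC (∑ r, f r) ≤ ∑ r, enormC (f r) := by
  simp only [enormC_eq_norm_toLp, WithLp.toLp_sum]
  exact norm_sum_le _ _

lemma enormC_mulVec_le {m n : Type*} [Fintype m] [Fintype n] [DecidableEq n]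
    (B : Matrix m n ℂ) (u : n → ℂ) : enormC (B *ᵥ u) ≤ rho B * enormC u := by
  rw [enormC_eq_norm_toLp, enormC_eq_norm_toLp]
  exact (LinearMap.toContinuousLinearMap (toEuclideanLin B)).le_opNorm (WithLp.toLp 2 u)

section Blocks

variable {ι κ d₁ d₂ : Type*} [Fintype κ] [Fintype d₂]

lemma block_mulVec (A : Matrix (ι × d₁) (κ × d₂) ℂ) (v : κ × d₂ → ℂ) (ℓ : ι) :
    (fun i => (A *ᵥ v) (ℓ, i)) = ∑ r, blk2 A ℓ r *ᵥ fun j => v (r, j) := by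
  ext i
  simp [mulVec, dotProduct, blk2, Fintype.sum_prod_type]

lemma enormC_block_mulVec_le [Fintype d₁] [DecidableEq d₂] (A : Matrix (ι × d₁) (κ × d₂) ℂ)
    (v : κ × d₂ → ℂ) (ℓ : ι) :
    enormC (fun i => (A *ᵥ v) (ℓ, i)) ≤ ∑ r, rho (blk2 A ℓ r) * enormC (fun j => v (r, j)) := by
  rw [block_mulVec]
  exact (enormC_sum_le _).trans (Finset.sum_le_sum fun r _ => enormC_mulVec_le _ _)

end Blocks

section ColumnSums

variable {ι κ d : Type*} [Fintype ι] [Fintype κ] [Fintype d] [DecidableEq d]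

lemma vnorm1_mulVec_le_sum_colSum (A : Matrix (ι × d) (κ × d) ℂ) (v : κ × d → ℂ) :
    vnorm1 (A *ᵥ v) ≤ ∑ r, (∑ ℓ, rho (blk2 A ℓ r)) * enormC (fun j => v (r, j)) := by
  calc vnorm1 (A *ᵥ v)
      ≤ ∑ ℓ, ∑ r, rho (blk2 A ℓ r) * enormC (fun j => v (r, j)) :=
        Finset.sum_le_sum fun ℓ _ => enormC_block_mulVec_le A v ℓ
    _ = ∑ r, (∑ ℓ, rho (blk2 A ℓ r)) * enormC (fun j => v (r, j)) := by
        rw [Finset.sum_comm]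
        simp only [Finset.sum_mul]

lemma colSum_le_rhoc (A : Matrix (ι × d) (κ × d) ℂ) (r : κ) :
    ∑ ℓ, rho (blk2 A ℓ r) ≤ rhoc A :=
  le_ciSup (f := fun r => ∑ ℓ, rho (blk2 A ℓ r)) (Set.finite_range _).bddAbove r

end ColumnSums

lemma rhoc_mul_Jsel {ι : Type*} [Fintype ι] {M d : ℕ} (A : Matrix (ι × Fin d) (Fin M × Fin d) ℂ)
    (r : Fin M) : rhoc (A * Jsel r) = ∑ ℓ, rho (blk2 A ℓ r) := by
  have hblk : ∀ ℓ, blk2 (A * Jsel r) ℓ () = blk2 A ℓ r := by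
    intro ℓ
    ext i j
    change ∑ k, A (ℓ, i) k * Jsel r k ((), j) = A (ℓ, i) (r, j)
    simp only [Jsel, of_apply, Fintype.sum_prod_type]
    rw [Finset.sum_eq_single r (fun b _ hb => by simp [hb]) (by simp)]
    simp
  simp only [rhoc, ciSup_unique, hblk]

theorem vnorm1_mulVec_le_rhoc (R M d : ℕ) (A : Matrix (Fin R × Fin d) (Fin M × Fin d) ℂ)
    (v : Fin M × Fin d → ℂ) (hv : ∀ ℓ : Fin M, 0 < enormC (fun j => v (ℓ, j))) :
    vnorm1 (A.mulVec v) ≤ rhoc A * vnorm1 v ∧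
    ((¬ ∀ ℓ ℓ' : Fin M, rhoc (A * Jsel ℓ) = rhoc (A * Jsel ℓ')) →
      vnorm1 (A.mulVec v) < rhoc A * vnorm1 v) := by
  set c : Fin M → ℝ := fun r => ∑ ℓ, rho (blk2 A ℓ r)
  have hc : ∀ r, c r * enormC (fun j => v (r, j)) ≤ rhoc A * enormC (fun j => v (r, j)) :=
    fun r => mul_le_mul_of_nonneg_right (colSum_le_rhoc A r) (hv r).le
  rw [show rhoc A * vnorm1 v = ∑ r, rhoc A * enormC (fun j => v (r, j)) from Finset.mul_sum _ _ _]
  refine ⟨(vnorm1_mulVec_le_sum_colSum A v).trans (Finset.sum_le_sum fun r _ => hc r), ?_⟩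
  intro hne
  obtain ⟨ℓ₀, ℓ₁, hne⟩ : ∃ ℓ₀ ℓ₁, c ℓ₀ ≠ c ℓ₁ := by simpa [rhoc_mul_Jsel] using hne
  obtain ⟨r, hr⟩ : ∃ r, c r < rhoc A := by
    rcases hne.lt_or_gt with h | h
    · exact ⟨ℓ₀, h.trans_le (colSum_le_rhoc A ℓ₁)⟩
    · exact ⟨ℓ₁, h.trans_le (colSum_le_rhoc A ℓ₀)⟩
  refine (vnorm1_mulVec_le_sum_colSum A v).trans_lt
    (Finset.sum_lt_sum (fun r _ => hc r) ⟨r, Finset.mem_univ r, ?_⟩)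
  exact mul_lt_mul_of_pos_right hr (hv r)
end
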